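/- For a word w ∈ F_2 the following are equivalent: (a) w lies in the third term γ_3(F_2) of the lower central series of F_2 (equivalently, w represents the identity in the discrete Heisenberg group, the free two-step nilpotent group on two generators); (b) φ(w) = 0 in ℤ² (the path traced by w on the lattice is closed) and S(D(w)) = 0, where S(γ) = Σ_{m∈ℤ²} m_1·γ(m,2) is the algebraic (oriented) area enclosed by the closed path of w. -/

import Mathlib

/-- The lattice `ℤ²`. -/
abbrev Z2 : Type := Fin 2 → ℤ

/-- Edge chains of the grid complex `E²` (Cayley graph of `ℤ²`). -/
abbrev C1Z2 : Type := (Z2 × Fin 2) →₀ ℤ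

/-- Translation action of `v ∈ ℤ²` on edge chains: `v • δ_{(m,i)} = δ_{(m+v,i)}`. -/
noncomputable def shiftZ (v : Z2) : C1Z2 →+ C1Z2 :=
  Finsupp.mapDomain.addMonoidHom fun p => (v + p.1, p.2)

/-- The abelianization homomorphism `φ : F₂ → ℤ²`. -/
def phiZ : FreeGroup (Fin 2) →* Multiplicative Z2 :=
  FreeGroup.lift fun i => Multiplicative.ofAdd (Pi.single i 1)

/-- The algebraic (oriented) area `S(γ) = Σ_{m ∈ ℤ²} m₁ · γ(m, 2)`. -/
noncomputable def Sarea : C1Z2 →+ ℤ :=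
  Finsupp.liftAddHom fun p =>
    zmultiplesHom ℤ (if p.2 = 1 then p.1 0 else 0)

open scoped commutatorElement

/-! The map `w ↦ (φ w, S (D w))` is a homomorphism from `F₂` to the discrete Heisenberg group,
`ℤ² × ℤ` with product `(v, s) (v', s') = (v + v', s + s' + v₀ v'₁)`: the twist comes from the
cocycle rule for `D` and `S (v • γ) = S γ + v₀ · T γ`, where `T` counts vertical edges. Its kernel
contains `γ₃(F₂)` since the Heisenberg group is nilpotent of class two. Conversely,
`(v, s) ↦ x ^ v₀ y ^ v₁ [x, y] ^ (s - v₀ v₁)` is a homomorphism into `F₂ ⧸ γ₃(F₂)`, because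
`[x ^ m, y ^ n] = [x, y] ^ (m n)` once `[x, y]` is central, and composed with the first map it is
the quotient map; so the kernel is exactly `γ₃(F₂)`. -/

theorem commutatorElement_zpow_zpow {G : Type*} [Group G] {x y : G}
    (hx : Commute ⁅x, y⁆ x) (hy : Commute ⁅x, y⁆ y) (m n : ℤ) :
    ⁅x ^ m, y ^ n⁆ = ⁅x, y⁆ ^ (m * n) := by
  set c := ⁅x, y⁆ with hc
  have hyx : SemiconjBy y x (c⁻¹ * x) := by
    rw [SemiconjBy, hc, commutatorElement_def]; group
  have hyxm : y * x ^ m = c⁻¹ ^ m * x ^ m * y := by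
    rw [← hx.inv_left.mul_zpow]; exact hyx.zpow_right m
  have hxmy : SemiconjBy (x ^ m) y (c ^ m * y) := by
    rw [SemiconjBy, mul_assoc, hyxm, inv_zpow, mul_assoc, mul_inv_cancel_left]
  have hxmyn := hxmy.zpow_right n
  rw [(hy.zpow_left m).mul_zpow, ← zpow_mul] at hxmyn
  rw [commutatorElement_def, hxmyn]; group

theorem QuotientGroup.commute_commutatorElement_of_lowerCentralSeries_two_le {G : Type*} [Group G]
    {N : Subgroup G} [N.Normal] (hN : (⊤ : Subgroup G).lowerCentralSeries 2 ≤ N)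
    (a b g : G ⧸ N) : Commute ⁅a, b⁆ g := by
  induction a using QuotientGroup.induction_on with | H a => ?_
  induction b using QuotientGroup.induction_on with | H b => ?_
  induction g using QuotientGroup.induction_on with | H g => ?_
  rw [← commutatorElement_eq_one_iff_commute]
  simp only [← QuotientGroup.mk'_apply, ← map_commutatorElement]
  rw [QuotientGroup.mk'_apply, QuotientGroup.eq_one_iff]
  exact hN (Subgroup.commutator_mem_commutator
    (Subgroup.commutator_mem_commutator (Subgroup.mem_top a) (Subgroup.mem_top b))
    (Subgroup.mem_top g))

/-- The discrete Heisenberg group in coordinates: `⟨v, s⟩` is the matrix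
`[[1, v 0, s], [0, 1, v 1], [0, 0, 1]]`. -/
@[ext] structure Heisenberg where
  pos : Z2
  area : ℤ

namespace Heisenberg

instance : Mul Heisenberg := ⟨fun p q => ⟨p.pos + q.pos, p.area + q.area + p.pos 0 * q.pos 1⟩⟩
instance : One Heisenberg := ⟨⟨0, 0⟩⟩
instance : Inv Heisenberg := ⟨fun p => ⟨-p.pos, -p.area + p.pos 0 * p.pos 1⟩⟩

@[simp] theorem pos_mul (p q : Heisenberg) : (p * q).pos = p.pos + q.pos := rfl
@[simp] theorem area_mul (p q : Heisenberg) :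
    (p * q).area = p.area + q.area + p.pos 0 * q.pos 1 := rfl
@[simp] theorem pos_one : (1 : Heisenberg).pos = 0 := rfl
@[simp] theorem area_one : (1 : Heisenberg).area = 0 := rfl
@[simp] theorem pos_inv (p : Heisenberg) : p⁻¹.pos = -p.pos := rfl
@[simp] theorem area_inv (p : Heisenberg) : p⁻¹.area = -p.area + p.pos 0 * p.pos 1 := rfl

instance : Group Heisenberg where
  mul_assoc _ _ _ := by ext <;> simp only [pos_mul, area_mul, Pi.add_apply] <;> ring
  one_mul _ := by ext <;> simp
  mul_one _ := by ext <;> simp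
  inv_mul_cancel _ := by ext <;> simp

theorem mem_center_of_pos_eq_zero {z : Heisenberg} (hz : z.pos = 0) :
    z ∈ Subgroup.center Heisenberg := by
  rw [Subgroup.mem_center_iff]
  intro g
  ext <;> simp [hz, add_comm]

theorem pos_commutatorElement (g h : Heisenberg) : ⁅g, h⁆.pos = 0 := by
  simp [commutatorElement_def]

theorem lowerCentralSeries_two_eq_bot : (⊤ : Subgroup Heisenberg).lowerCentralSeries 2 = ⊥ := by
  refine Subgroup.lowerCentralSeries_succ_eq_bot _ ?_
  rw [Subgroup.top_lowerCentralSeries_one, commutator_def, Subgroup.commutator_le]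
  exact fun g _ h _ => mem_center_of_pos_eq_zero (pos_commutatorElement g h)

section lift

variable {G : Type*} [Group G] {x y : G} (hx : Commute ⁅x, y⁆ x) (hy : Commute ⁅x, y⁆ y)

/-- In `Heisenberg`, `⟨v, s⟩ = X ^ v 0 * Y ^ v 1 * ⁅X, Y⁆ ^ (s - v 0 * v 1)` for the generators
`X = ⟨Pi.single 0 1, 0⟩`, `Y = ⟨Pi.single 1 1, 0⟩`; this is the homomorphism `X ↦ x`, `Y ↦ y`. -/
def lift : Heisenberg →* G :=
  MonoidHom.mk' (fun p => x ^ p.pos 0 * y ^ p.pos 1 * ⁅x, y⁆ ^ (p.area - p.pos 0 * p.pos 1))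
    fun p q => by
      set c := ⁅x, y⁆
      have hyx : y ^ p.pos 1 * x ^ q.pos 0 =
          c ^ (-(q.pos 0 * p.pos 1)) * (x ^ q.pos 0 * y ^ p.pos 1) := by
        rw [zpow_neg, ← commutatorElement_zpow_zpow hx hy, commutatorElement_def]; group
      have hc (k m n : ℤ) : Commute (c ^ k) (x ^ m * y ^ n) :=
        ((hx.zpow_right m).mul_right (hy.zpow_right n)).zpow_left k
      simp only [pos_mul, area_mul, Pi.add_apply]
      symm
      calc _ = x ^ p.pos 0 * y ^ p.pos 1 * (c ^ (p.area - p.pos 0 * p.pos 1) *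
            (x ^ q.pos 0 * y ^ q.pos 1)) * c ^ (q.area - q.pos 0 * q.pos 1) := by group
        _ = x ^ p.pos 0 * (y ^ p.pos 1 * x ^ q.pos 0) * y ^ q.pos 1 *
            c ^ (p.area - p.pos 0 * p.pos 1) * c ^ (q.area - q.pos 0 * q.pos 1) := by
          rw [(hc _ _ _).eq]; group
        _ = x ^ p.pos 0 * (c ^ (-(q.pos 0 * p.pos 1)) * (x ^ q.pos 0 * y ^ (p.pos 1 + q.pos 1))) *
            c ^ (p.area - p.pos 0 * p.pos 1) * c ^ (q.area - q.pos 0 * q.pos 1) := by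
          rw [hyx]; group
        _ = _ := by rw [(hc _ _ _).eq]; group

end lift

noncomputable def ofFreeGroup : FreeGroup (Fin 2) →* Heisenberg :=
  FreeGroup.lift fun i => ⟨Pi.single i 1, 0⟩

theorem ker_ofFreeGroup :
    ofFreeGroup.ker = (⊤ : Subgroup (FreeGroup (Fin 2))).lowerCentralSeries 2 := by
  set N := (⊤ : Subgroup (FreeGroup (Fin 2))).lowerCentralSeries 2
  refine le_antisymm (fun w hw => ?_) (fun w hw => ?_)
  · have hc := QuotientGroup.commute_commutatorElement_of_lowerCentralSeries_two_le (le_refl N)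
    let x : FreeGroup (Fin 2) ⧸ N := FreeGroup.of (0 : Fin 2)
    let y : FreeGroup (Fin 2) ⧸ N := FreeGroup.of (1 : Fin 2)
    have hlift : (lift (hc x y x) (hc x y y)).comp ofFreeGroup = QuotientGroup.mk' N :=
      FreeGroup.ext_hom _ _ fun i => by fin_cases i <;> simp [lift, ofFreeGroup, x, y]
    rw [← QuotientGroup.eq_one_iff, ← QuotientGroup.mk'_apply, ← hlift, MonoidHom.comp_apply,
      hw, map_one]
  · have hmap := Subgroup.mem_map_of_mem ofFreeGroup hw
    rw [Subgroup.map_lowerCentralSeries] at hmap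
    have hw' : ofFreeGroup w ∈ (⊤ : Subgroup Heisenberg).lowerCentralSeries 2 :=
      Subgroup.lowerCentralSeries_mono 2 le_top hmap
    rwa [lowerCentralSeries_two_eq_bot] at hw'

end Heisenberg

noncomputable def vertSum : C1Z2 →+ ℤ :=
  Finsupp.liftAddHom fun p => zmultiplesHom ℤ (if p.2 = 1 then 1 else 0)

theorem vertSum_shiftZ (v : Z2) (γ : C1Z2) : vertSum (shiftZ v γ) = vertSum γ := by
  have : vertSum.comp (shiftZ v) = vertSum := by
    ext p
    simp [vertSum, shiftZ]
  exact DFunLike.congr_fun this γ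

theorem Sarea_shiftZ (v : Z2) (γ : C1Z2) : Sarea (shiftZ v γ) = Sarea γ + v 0 * vertSum γ := by
  have : Sarea.comp (shiftZ v) = Sarea + v 0 • vertSum := by
    ext ⟨m, i⟩
    fin_cases i <;> simp [Sarea, vertSum, shiftZ, add_comm]
  exact DFunLike.congr_fun this γ

section Cocycle

variable {D : FreeGroup (Fin 2) → C1Z2}
  (hD1 : ∀ i : Fin 2, D (FreeGroup.of i) = Finsupp.single ((0 : Z2), i) 1)
  (hDmul : ∀ u v : FreeGroup (Fin 2),
      D (u * v) = D u + shiftZ (Multiplicative.toAdd (phiZ u)) (D v))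
include hD1 hDmul

theorem vertSum_D (w : FreeGroup (Fin 2)) :
    vertSum (D w) = Multiplicative.toAdd (phiZ w) 1 := by
  let f : FreeGroup (Fin 2) →* Multiplicative ℤ :=
    MonoidHom.mk' (fun w => .ofAdd (vertSum (D w))) fun u v => by
      simp only [hDmul, map_add, vertSum_shiftZ, ofAdd_add]
  let g : FreeGroup (Fin 2) →* Multiplicative ℤ :=
    (AddMonoidHom.toMultiplicative (Pi.evalAddMonoidHom (fun _ => ℤ) 1)).comp phiZ
  have hfg : f = g :=
    FreeGroup.ext_hom _ _ fun i => by fin_cases i <;> simp [f, g, hD1, vertSum, phiZ]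
  exact congrArg Multiplicative.toAdd (DFunLike.congr_fun hfg w)

theorem Heisenberg.ofFreeGroup_eq_mk_phiZ_Sarea (w : FreeGroup (Fin 2)) :
    ofFreeGroup w = ⟨Multiplicative.toAdd (phiZ w), Sarea (D w)⟩ := by
  let f : FreeGroup (Fin 2) →* Heisenberg :=
    MonoidHom.mk' (fun w => ⟨Multiplicative.toAdd (phiZ w), Sarea (D w)⟩) fun u v => by
      ext
      · simp
      · simp only [hDmul, map_add, Sarea_shiftZ, vertSum_D hD1 hDmul, area_mul]; ring
  have hf : ofFreeGroup = f :=
    FreeGroup.ext_hom _ _ fun i => by simp [f, hD1, ofFreeGroup, phiZ, Sarea]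
  exact DFunLike.congr_fun hf w

end Cocycle

/-- A word `w ∈ F₂` lies in `γ₃(F₂)` (i.e. represents the identity of the discrete
Heisenberg group, the free two-step nilpotent group on two generators) iff the path it
traces on the lattice is closed (`φ w = 0` in `ℤ²`) and the algebraic (oriented) area
enclosed by this closed path is zero (`S(D w) = 0`). -/
theorem heisenberg_loop_criterion
    (D : FreeGroup (Fin 2) → C1Z2)
    (hD1 : ∀ i : Fin 2, D (FreeGroup.of i) = Finsupp.single ((0 : Z2), i) 1)
    (hDmul : ∀ u v : FreeGroup (Fin 2),
      D (u * v) = D u + shiftZ (Multiplicative.toAdd (phiZ u)) (D v)) :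
    ∀ w : FreeGroup (Fin 2),
      w ∈ Subgroup.lowerCentralSeries (⊤ : Subgroup (FreeGroup (Fin 2))) 2 ↔
        (phiZ w = 1 ∧ Sarea (D w) = 0) := by
  intro w
  rw [← Heisenberg.ker_ofFreeGroup, MonoidHom.mem_ker,
    Heisenberg.ofFreeGroup_eq_mk_phiZ_Sarea hD1 hDmul, Heisenberg.ext_iff]
  simp
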